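/- Let Ω ⊆ ℝⁿ be an open connected set and F : Ω → ℝ a C^∞ function whose Hessian D²F(x) is nondegenerate at every x ∈ Ω and whose Hessian determinant det D²F(x) (with respect to the standard basis) is constant on Ω. Then for every y ∈ Ω and every u ∈ ℝⁿ, the multiplication operator L_u of the difference-tensor algebra of F at y has vanishing trace: tr L_u = 0. -/

import Mathlib

/-- Second iterated (Fréchet) derivative of `F` within `Ω` at `x`, as a bilinear form. -/
noncomputable def D2 {n : ℕ} (F : EuclideanSpace ℝ (Fin n) → ℝ)
    (Ω : Set (EuclideanSpace ℝ (Fin n))) (x u v : EuclideanSpace ℝ (Fin n)) : ℝ :=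
  iteratedFDerivWithin ℝ 2 F Ω x ![u, v]

/-- Third iterated (Fréchet) derivative of `F` within `Ω` at `x`, as a trilinear form. -/
noncomputable def D3 {n : ℕ} (F : EuclideanSpace ℝ (Fin n) → ℝ)
    (Ω : Set (EuclideanSpace ℝ (Fin n))) (x u v w : EuclideanSpace ℝ (Fin n)) : ℝ :=
  iteratedFDerivWithin ℝ 3 F Ω x ![u, v, w]

/-- The matrix of the Hessian of `F` at `x` with respect to the standard basis. -/
noncomputable def hessMatrix {n : ℕ} (F : EuclideanSpace ℝ (Fin n) → ℝ)
    (Ω : Set (EuclideanSpace ℝ (Fin n))) (x : EuclideanSpace ℝ (Fin n)) :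
    Matrix (Fin n) (Fin n) ℝ :=
  Matrix.of fun i j => D2 F Ω x (EuclideanSpace.single i 1) (EuclideanSpace.single j 1)

/-- if `F` is smooth on the open connected set `Ω`, with everywhere nondegenerate
Hessian whose determinant (w.r.t. the standard basis) is constant on `Ω`, then for every
`y ∈ Ω` and every `u`, the multiplication operator `L_u = mul u` of the difference-tensor
algebra of `F` at `y` has vanishing trace. -/
theorem stmt_2 {n : ℕ} (Ω : Set (EuclideanSpace ℝ (Fin n))) (hΩ : IsOpen Ω)
    (hconn : IsConnected Ω)
    (F : EuclideanSpace ℝ (Fin n) → ℝ) (hF : ContDiffOn ℝ (⊤ : ℕ∞) F Ω)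
    (hnd : ∀ x ∈ Ω, ∀ u, (∀ v, D2 F Ω x u v = 0) → u = 0)
    (hdet : ∀ x ∈ Ω, ∀ x' ∈ Ω, (hessMatrix F Ω x).det = (hessMatrix F Ω x').det)
    (y : EuclideanSpace ℝ (Fin n)) (hy : y ∈ Ω)
    (mul : EuclideanSpace ℝ (Fin n) →ₗ[ℝ] EuclideanSpace ℝ (Fin n) →ₗ[ℝ] EuclideanSpace ℝ (Fin n))
    (hmul : ∀ u v w, D2 F Ω y (mul u v) w = -(1/2) * D3 F Ω y u v w) :
    ∀ u, LinearMap.trace ℝ (EuclideanSpace ℝ (Fin n)) (mul u) = 0 := by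
  classical
  intro u
  have hU : UniqueDiffOn ℝ Ω := hΩ.uniqueDiffOn
  set e : Fin n → EuclideanSpace ℝ (Fin n) := fun i => EuclideanSpace.single i 1 with he
  -- the second derivative as a function, and its derivative within Ω at y
  set g : EuclideanSpace ℝ (Fin n) →
      ContinuousMultilinearMap ℝ (fun _ : Fin 2 => EuclideanSpace ℝ (Fin n)) ℝ :=
    iteratedFDerivWithin ℝ 2 F Ω with hgdef
  have hgd : DifferentiableOn ℝ g Ω := by
    rw [hgdef]
    exact hF.differentiableOn_iteratedFDerivWithin
      (WithTop.coe_lt_coe.2 (ENat.coe_lt_top 2)) hU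
  set g' := fderivWithin ℝ g Ω y with hg'def
  have hg' : HasFDerivWithinAt g g' Ω y := (hgd y hy).hasFDerivWithinAt
  -- expressing D3 at y through g'
  have hD3 : ∀ a v w, D3 F Ω y a v w = g' a ![v, w] := by
    intro a v w
    have htail : Fin.tail ![a, v, w] = ![v, w] := by
      ext i
      fin_cases i <;> rfl
    have h := iteratedFDerivWithin_succ_apply_left (𝕜 := ℝ) (f := F) (s := Ω) (x := y)
      (n := 2) ![a, v, w]
    rw [htail] at h
    exact h
  -- D2 at y as a bilinear (CLM-valued) object
  set f2 := fderivWithin ℝ (fderivWithin ℝ F Ω) Ω y with hf2def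
  have hD2 : ∀ a b, D2 F Ω y a b = f2 a b := by
    intro a b
    exact iteratedFDerivWithin_two_apply F hU hy ![a, b]
  -- every vector is the sum of its coordinates times basis vectors
  set b : Module.Basis (Fin n) ℝ (EuclideanSpace ℝ (Fin n)) :=
    (EuclideanSpace.basisFun (Fin n) ℝ).toBasis with hb
  have hbe : ∀ i, b i = e i := by
    intro i
    rw [hb, OrthonormalBasis.coe_toBasis, EuclideanSpace.basisFun_apply, he]
  have hbrepr : ∀ (z : EuclideanSpace ℝ (Fin n)) (i : Fin n), b.repr z i = z i := by
    intro z i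
    rw [hb, OrthonormalBasis.coe_toBasis_repr_apply, EuclideanSpace.basisFun_repr]
  have hbasis : ∀ z : EuclideanSpace ℝ (Fin n), ∑ j, z j • e j = z := by
    intro z
    have h := b.sum_repr z
    calc ∑ j, z j • e j = ∑ j, b.repr z j • b j := by
          refine Finset.sum_congr rfl fun j _ => ?_
          rw [hbrepr, hbe]
      _ = z := h
  -- the Hessian matrix at y and the direction-u derivative matrix
  set A : Matrix (Fin n) (Fin n) ℝ := hessMatrix F Ω y with hA
  have hAentry : ∀ i j, A i j = g y ![e i, e j] := fun i j => rfl
  set Cmat : Matrix (Fin n) (Fin n) ℝ := Matrix.of fun i j => g' u ![e i, e j] with hCdef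
  -- Step 1: the determinant is constant, hence trace (adjugate A * Cmat) = 0
  have key : Matrix.trace (A.adjugate * Cmat) = 0 := by
    have hent : ∀ i j : Fin n, HasFDerivWithinAt (fun x => g x ![e i, e j])
        (g'.flipMultilinear ![e i, e j]) Ω y :=
      fun i j => hg'.continuousMultilinear_apply_const _
    have hq : HasFDerivWithinAt (fun x => (hessMatrix F Ω x).det)
        (∑ σ : Equiv.Perm (Fin n), (((Equiv.Perm.sign σ : ℤ) : ℝ)) •
          ∑ i, (∏ j ∈ Finset.univ.erase i, g y ![e (σ j), e j]) •
            g'.flipMultilinear ![e (σ i), e i]) Ω y := by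
      have heq : ∀ x, (hessMatrix F Ω x).det =
          ∑ σ : Equiv.Perm (Fin n), (((Equiv.Perm.sign σ : ℤ) : ℝ)) *
            ∏ i, g x ![e (σ i), e i] := by
        intro x
        rw [Matrix.det_apply]
        refine Finset.sum_congr rfl fun σ _ => ?_
        rw [Units.smul_def, zsmul_eq_mul]
        congr 1
      have hmain : HasFDerivWithinAt (fun x => ∑ σ : Equiv.Perm (Fin n),
          (((Equiv.Perm.sign σ : ℤ) : ℝ)) * ∏ i, g x ![e (σ i), e i])
          (∑ σ : Equiv.Perm (Fin n), (((Equiv.Perm.sign σ : ℤ) : ℝ)) •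
            ∑ i, (∏ j ∈ Finset.univ.erase i, g y ![e (σ j), e j]) •
              g'.flipMultilinear ![e (σ i), e i]) Ω y := by
        refine HasFDerivWithinAt.fun_sum fun σ _ => ?_
        exact (HasFDerivWithinAt.finset_prod fun i _ => hent (σ i) i).const_mul _
      exact hmain.congr (fun x _ => heq x) (heq y)
    have hq0 : HasFDerivWithinAt (fun x => (hessMatrix F Ω x).det)
        (0 : EuclideanSpace ℝ (Fin n) →L[ℝ] ℝ) Ω y := by
      exact (hasFDerivWithinAt_const ((hessMatrix F Ω y).det) y Ω).congr
        (fun x hx => hdet x hx y hy) rfl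
    have hz := (hU y hy).eq hq hq0
    have hz' := ContinuousLinearMap.ext_iff.1 hz u
    rw [ContinuousLinearMap.zero_apply] at hz'
    -- rewrite the evaluated derivative
    have hz'' : ∑ σ : Equiv.Perm (Fin n), (((Equiv.Perm.sign σ : ℤ) : ℝ)) *
        ∑ i, (∏ j ∈ Finset.univ.erase i, A (σ j) j) * Cmat (σ i) i = 0 := by
      rw [← hz']
      rw [ContinuousLinearMap.sum_apply]
      refine Finset.sum_congr rfl fun σ _ => ?_
      rw [ContinuousLinearMap.smul_apply, smul_eq_mul]
      congr 1
      rw [ContinuousLinearMap.sum_apply]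
      refine Finset.sum_congr rfl fun i _ => ?_
      rw [ContinuousLinearMap.smul_apply, smul_eq_mul]
      congr 1
    calc Matrix.trace (A.adjugate * Cmat)
        = ∑ i, ∑ k, A.adjugate i k * Cmat k i := by
          simp [Matrix.trace, Matrix.diag, Matrix.mul_apply]
      _ = ∑ i, (A.cramer (fun k => Cmat k i)) i := by
          refine Finset.sum_congr rfl fun i _ => ?_
          rw [Matrix.cramer_eq_adjugate_mulVec]
          simp [Matrix.mulVec, dotProduct]
      _ = ∑ i, (A.updateCol i (fun k => Cmat k i)).det := by
          refine Finset.sum_congr rfl fun i _ => ?_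
          rw [Matrix.cramer_apply]
      _ = ∑ i, ∑ σ : Equiv.Perm (Fin n), (((Equiv.Perm.sign σ : ℤ) : ℝ)) *
            (Cmat (σ i) i * ∏ j ∈ Finset.univ.erase i, A (σ j) j) := by
          refine Finset.sum_congr rfl fun i _ => ?_
          rw [Matrix.det_apply]
          refine Finset.sum_congr rfl fun σ _ => ?_
          rw [Units.smul_def, zsmul_eq_mul]
          congr 1
          rw [← Finset.mul_prod_erase Finset.univ _ (Finset.mem_univ i)]
          rw [Matrix.updateCol_apply]
          simp only [if_pos rfl]
          refine congrArg _ ?_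
          refine Finset.prod_congr rfl fun j hj => ?_
          rw [Matrix.updateCol_apply, if_neg (Finset.ne_of_mem_erase hj)]
      _ = ∑ σ : Equiv.Perm (Fin n), (((Equiv.Perm.sign σ : ℤ) : ℝ)) *
            ∑ i, (∏ j ∈ Finset.univ.erase i, A (σ j) j) * Cmat (σ i) i := by
          rw [Finset.sum_comm]
          refine Finset.sum_congr rfl fun σ _ => ?_
          rw [Finset.mul_sum]
          refine Finset.sum_congr rfl fun i _ => ?_
          ring
      _ = 0 := hz''
  -- Step 2: nondegeneracy gives det A ≠ 0
  have hAdet : A.det ≠ 0 := by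
    intro h0
    obtain ⟨v, hv, hv0⟩ := Matrix.exists_vecMul_eq_zero_iff.2 h0
    set w : EuclideanSpace ℝ (Fin n) := (WithLp.equiv 2 (Fin n → ℝ)).symm v with hw
    have hwcoord : ∀ j, w j = v j := fun j => rfl
    have hwbase : ∀ j, f2 w (e j) = 0 := by
      intro j
      have hj : ∑ i, v i * A i j = 0 := by
        have := congrFun hv0 j
        simpa [Matrix.vecMul, dotProduct] using this
      conv_lhs => rw [← hbasis w]
      rw [map_sum]
      rw [ContinuousLinearMap.sum_apply]
      calc ∑ i, (f2 (w i • e i)) (e j) = ∑ i, v i * A i j := by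
            refine Finset.sum_congr rfl fun i _ => ?_
            rw [map_smul, hwcoord]
            have hfa : f2 (e i) (e j) = A i j := (hD2 (e i) (e j)).symm
            rw [ContinuousLinearMap.smul_apply, hfa, smul_eq_mul]
        _ = 0 := hj
    have hw0 : w = 0 := by
      refine hnd y hy w fun z => ?_
      rw [hD2]
      conv_lhs => rw [← hbasis z]
      rw [map_sum]
      refine Finset.sum_eq_zero fun j _ => ?_
      rw [map_smul, hwbase j, smul_zero]
    exact hv (funext fun j => by rw [show v j = w j from rfl, hw0, WithLp.ofLp_zero])
  -- Step 3: relate mul u to the matrices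
  set M : Matrix (Fin n) (Fin n) ℝ := LinearMap.toMatrix b b (mul u) with hM
  have hMentry : ∀ k j, M k j = (mul u (e j)) k := by
    intro k j
    rw [hM, LinearMap.toMatrix_apply, hbrepr, hbe]
  have hmulrepr : ∀ j, mul u (e j) = ∑ k, M k j • e k := by
    intro j
    conv_lhs => rw [← hbasis (mul u (e j))]
    refine Finset.sum_congr rfl fun k _ => ?_
    rw [hMentry]
  have hrel : A.transpose * M = (-(1/2) : ℝ) • Cmat.transpose := by
    ext i j
    have h1 : D2 F Ω y (mul u (e j)) (e i) = -(1/2) * D3 F Ω y u (e j) (e i) := hmul u (e j) (e i)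
    have hLHS : D2 F Ω y (mul u (e j)) (e i) = ∑ k, A k i * M k j := by
      rw [hD2, hmulrepr j, map_sum, ContinuousLinearMap.sum_apply]
      refine Finset.sum_congr rfl fun k _ => ?_
      rw [map_smul, ContinuousLinearMap.smul_apply, smul_eq_mul]
      have hfa : f2 (e k) (e i) = A k i := (hD2 (e k) (e i)).symm
      rw [hfa]
      ring
    have hRHS : D3 F Ω y u (e j) (e i) = Cmat j i := by
      rw [hD3]
      rfl
    have hfin : ∑ k, A k i * M k j = -(1/2) * Cmat j i := by rw [← hLHS, h1, hRHS]
    calc (A.transpose * M) i j = ∑ k, A k i * M k j := by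
          simp [Matrix.mul_apply, Matrix.transpose_apply]
      _ = -(1/2) * Cmat j i := hfin
      _ = ((-(1/2) : ℝ) • Cmat.transpose) i j := by
          simp [Matrix.transpose_apply]
  -- multiply by the adjugate of A.transpose and take traces
  have h2 : A.det • M = (-(1/2) : ℝ) • ((A.transpose).adjugate * Cmat.transpose) := by
    have hmm := congrArg (fun X => (A.transpose).adjugate * X) hrel
    rw [← Matrix.mul_assoc, Matrix.adjugate_mul, Matrix.det_transpose, Matrix.smul_mul,
      Matrix.one_mul, Matrix.mul_smul] at hmm
    exact hmm
  have h3 : A.det * Matrix.trace M = (-(1/2)) * Matrix.trace ((A.transpose).adjugate * Cmat.transpose) := by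
    have := congrArg Matrix.trace h2
    simpa [Matrix.trace_smul, smul_eq_mul] using this
  have h4 : Matrix.trace ((A.transpose).adjugate * Cmat.transpose) = 0 := by
    rw [← Matrix.adjugate_transpose, ← Matrix.transpose_mul, Matrix.trace_transpose,
      Matrix.trace_mul_comm]
    exact key
  have h5 : Matrix.trace M = 0 := by
    rw [h4, mul_zero] at h3
    exact (mul_eq_zero.1 h3).resolve_left hAdet
  rw [LinearMap.trace_eq_matrix_trace ℝ b (mul u), ← hM]
  exact h5
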